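/- With G = √2·γ, the matrix Θ = I + [[0, β+iG, δ+iGβ], [β-iG, δ+G², β+iG], [δ-iGβ, β-iG, 0]] satisfies the Dieudonné equation H† Θ = Θ H for H = [[-2iγ, √2, 0], [√2, 0, √2], [0, √2, 2iγ]], for all real β, δ, γ. -/
import Mathlib


open Complex Matrix

theorem stmt4 (γ β δ : ℝ) (G : ℝ) (hG : G = Real.sqrt 2 * γ) :
    (!![-2 * I * γ, (Real.sqrt 2 : ℂ), 0;
        (Real.sqrt 2 : ℂ), 0, (Real.sqrt 2 : ℂ);
        0, (Real.sqrt 2 : ℂ), 2 * I * γ] : Matrix (Fin 3) (Fin 3) ℂ)ᴴ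
      * ((1 : Matrix (Fin 3) (Fin 3) ℂ) +
          !![0, (β : ℂ) + I * G, (δ : ℂ) + I * G * β;
             (β : ℂ) - I * G, (δ : ℂ) + (G : ℂ) ^ 2, (β : ℂ) + I * G;
             (δ : ℂ) - I * G * β, (β : ℂ) - I * G, 0])
    = ((1 : Matrix (Fin 3) (Fin 3) ℂ) +
          !![0, (β : ℂ) + I * G, (δ : ℂ) + I * G * β;
             (β : ℂ) - I * G, (δ : ℂ) + (G : ℂ) ^ 2, (β : ℂ) + I * G;
             (δ : ℂ) - I * G * β, (β : ℂ) - I * G, 0])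
      * !![-2 * I * γ, (Real.sqrt 2 : ℂ), 0;
           (Real.sqrt 2 : ℂ), 0, (Real.sqrt 2 : ℂ);
           0, (Real.sqrt 2 : ℂ), 2 * I * γ] := by
  subst hG
  have h2 : ((Real.sqrt 2 : ℂ)) ^ 2 = 2 := by
    rw [sq, ← Complex.ofReal_mul, Real.mul_self_sqrt (by norm_num : (0:ℝ) ≤ 2)]; norm_num
  have h3 : ((Real.sqrt 2 : ℂ)) ^ 3 = 2 * (Real.sqrt 2 : ℂ) := by
    rw [pow_succ, h2]
  have h4 : ((Real.sqrt 2 : ℂ)) ^ 4 = 4 := by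
    rw [show (4:ℕ) = 3+1 from rfl, pow_succ, h3]; ring_nf; rw [h2]; ring
  have hc2 : (starRingEnd ℂ) 2 = 2 := by rw [show (2:ℂ) = ((2:ℝ):ℂ) by norm_num, Complex.conj_ofReal]
  ext i j
  fin_cases i <;> fin_cases j <;>
    simp [Matrix.mul_apply, Fin.sum_univ_three, Matrix.one_apply, conjTranspose_apply,
      Complex.star_def, map_add, map_sub, _root_.map_mul, Complex.conj_ofReal, Complex.conj_I] <;>
    push_cast <;> ring_nf <;>
    simp only [hc2, Complex.I_sq, h2, h3, h4] <;> ring
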